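/- Let X, Y be sets and c : X × Y → ℝ a real-valued (everywhere finite) cost function. Then a set Γ ⊆ X × Y is c-path-bounded if and only if it is c-cyclically monotone. -/
import Mathlib


/-- A set `Γ ⊆ X × Y` is `c`-cyclically monotone, for a real-valued cost. -/
def CCyclicallyMonotone {X Y : Type*} (c : X → Y → ℝ) (Γ : Set (X × Y)) : Prop :=
  ∀ (k : ℕ) (p : Fin k → X × Y), (∀ i, p i ∈ Γ) →
    ∀ σ : Equiv.Perm (Fin k),
      ∑ i, c (p i).1 (p i).2 ≤ ∑ i, c (p i).1 (p (σ i)).2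

/-- The sum `c(x,y) − c(x₁,y) + ∑_{i=1}^{m−1} (c(xᵢ,yᵢ) − c(x_{i+1},yᵢ)) + c(x_m,y_m) − c(z,y_m)`
along a path `f` (with `m+1` intermediate points) from `p = (x,y)` to `q = (z,w)`. -/
def pathSum {X Y : Type*} (c : X → Y → ℝ) (p q : X × Y) {m : ℕ}
    (f : Fin (m + 1) → X × Y) : ℝ :=
  (c p.1 p.2 - c (f 0).1 p.2)
    + ∑ i : Fin m, (c (f i.castSucc).1 (f i.castSucc).2 - c (f i.succ).1 (f i.castSucc).2)
    + (c (f (Fin.last m)).1 (f (Fin.last m)).2 - c q.1 (f (Fin.last m)).2)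

/-- A set `Γ ⊆ X × Y` is `c`-path-bounded (for a real-valued cost the finiteness
condition `c(x,y) < ∞` on `Γ` is automatic). -/
def CPathBounded {X Y : Type*} (c : X → Y → ℝ) (Γ : Set (X × Y)) : Prop :=
  ∀ p ∈ Γ, ∀ q ∈ Γ, ∃ M : ℝ, ∀ (m : ℕ) (f : Fin (m + 1) → X × Y),
    (∀ i, f i ∈ Γ) → pathSum c p q f ≤ M

namespace CPBAux

variable {X Y : Type*}

/-- Single "step" cost along a walk. -/
def D (c : X → Y → ℝ) (a b : X × Y) : ℝ := c a.1 a.2 - c b.1 a.2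

/-- The points of the walk `p, f 0, …, f m, q` indexed by `ℕ`. -/
def G (p q : X × Y) {m : ℕ} (f : Fin (m + 1) → X × Y) (s : ℕ) : X × Y :=
  if h : 1 ≤ s ∧ s ≤ m + 1 then f ⟨s - 1, by omega⟩ else if s = 0 then p else q

lemma G_zero (p q : X × Y) {m : ℕ} (f : Fin (m + 1) → X × Y) : G p q f 0 = p := by
  simp [G]

lemma G_last (p q : X × Y) {m : ℕ} (f : Fin (m + 1) → X × Y) : G p q f (m + 2) = q := by
  have h : ¬ (1 ≤ m + 2 ∧ m + 2 ≤ m + 1) := by omega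
  simp [G, h]

lemma G_f (p q : X × Y) {m : ℕ} (f : Fin (m + 1) → X × Y) (i : Fin (m + 1)) :
    G p q f (↑i + 1) = f i := by
  have h : 1 ≤ (i : ℕ) + 1 ∧ (i : ℕ) + 1 ≤ m + 1 := by omega
  simp only [G, dif_pos h, Nat.add_sub_cancel, Fin.eta]

lemma G_mem {Γ : Set (X × Y)} {p q : X × Y} {m : ℕ} {f : Fin (m + 1) → X × Y}
    (hp : p ∈ Γ) (hq : q ∈ Γ) (hf : ∀ i, f i ∈ Γ) (s : ℕ) : G p q f s ∈ Γ := by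
  unfold G
  split_ifs with h1 h2
  · exact hf _
  · exact hp
  · exact hq

/-- `pathSum` equals the walk sum of the step costs. -/
lemma pathSum_eq (c : X → Y → ℝ) (p q : X × Y) {m : ℕ} (f : Fin (m + 1) → X × Y) :
    pathSum c p q f
      = ∑ s ∈ Finset.range (m + 2), D c (G p q f s) (G p q f (s + 1)) := by
  rw [Finset.sum_range_succ, Finset.sum_range_succ']
  have h0 : G p q f 0 = p := G_zero p q f
  have h1 : G p q f 1 = f 0 := by simpa using G_f p q f 0
  have hm1 : G p q f (m + 1) = f (Fin.last m) := by
    simpa using G_f p q f (Fin.last m)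
  have hm2 : G p q f (m + 2) = q := G_last p q f
  have hmid : ∑ i : Fin m, (c (f i.castSucc).1 (f i.castSucc).2
        - c (f i.succ).1 (f i.castSucc).2)
      = ∑ s ∈ Finset.range m, D c (G p q f (s + 1)) (G p q f (s + 1 + 1)) := by
    rw [← Fin.sum_univ_eq_sum_range (fun s => D c (G p q f (s + 1)) (G p q f (s + 1 + 1))) m]
    refine Finset.sum_congr rfl fun i _ => ?_
    have e1 : G p q f (↑i + 1) = f i.castSucc := by
      simpa using G_f p q f i.castSucc
    have e2 : G p q f (↑i + 1 + 1) = f i.succ := by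
      have := G_f p q f i.succ
      simpa [Fin.val_succ] using this
    rw [e1, e2, D]
  unfold pathSum
  rw [hmid, h0, h1, hm1, hm2]
  simp only [D, h0, h1, hm1, hm2]
  ring

end CPBAux

open CPBAux in
/-- For a real-valued (everywhere finite) cost, a set is `c`-path-bounded if and only if
it is `c`-cyclically monotone. -/
theorem cPathBounded_iff_cCyclicallyMonotone
    {X Y : Type*} (c : X → Y → ℝ) (Γ : Set (X × Y)) :
    CPathBounded c Γ ↔ CCyclicallyMonotone c Γ := by
  constructor
  · -- path-bounded → cyclically monotone
    intro hpb k p hp σ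
    by_contra hcon
    push_neg at hcon
    set τ : Equiv.Perm (Fin k) := σ⁻¹ with hτ
    set g : Fin k → ℝ := fun j => D c (p j) (p (τ j)) with hg
    have hε : 0 < ∑ j, g j := by
      have key : ∑ j, c (p (τ j)).1 (p j).2 = ∑ i, c (p i).1 (p (σ i)).2 := by
        rw [← Equiv.sum_comp σ (fun j => c (p (τ j)).1 (p j).2)]
        simp [hτ]
      have : ∑ j, g j = ∑ i, c (p i).1 (p i).2 - ∑ i, c (p i).1 (p (σ i)).2 := by
        simp only [hg, D]
        rw [Finset.sum_sub_distrib, key]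
      rw [this]
      linarith
    set n : ℕ := orderOf τ with hn
    have hnpos : 0 < n := orderOf_pos τ
    have hτn : τ ^ n = 1 := pow_orderOf_eq_one τ
    have hdouble : ∑ j : Fin k, ∑ t ∈ Finset.range n, g ((τ ^ t) j)
        = (n : ℝ) * ∑ j, g j := by
      rw [Finset.sum_comm]
      have : ∀ t, ∑ j, g ((τ ^ t) j) = ∑ j, g j := fun t => Equiv.sum_comp (τ ^ t) g
      rw [Finset.sum_congr rfl fun t _ => this t]
      simp [Finset.sum_const, nsmul_eq_mul]
    have hex : ∃ j₀ : Fin k, 0 < ∑ t ∈ Finset.range n, g ((τ ^ t) j₀) := by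
      by_contra h
      push_neg at h
      have h1 : ∑ j : Fin k, ∑ t ∈ Finset.range n, g ((τ ^ t) j) ≤ 0 :=
        Finset.sum_nonpos fun j _ => h j
      have h2 : (0 : ℝ) < (n : ℝ) * ∑ j, g j :=
        mul_pos (by exact_mod_cast hnpos) hε
      rw [hdouble] at h1
      linarith
    obtain ⟨j₀, hj₀⟩ := hex
    set Q : ℕ → X × Y := fun t => p ((τ ^ t) j₀) with hQ
    have hper : ∀ t, Q (t + n) = Q t := by
      intro t
      simp [hQ, pow_add, hτn]
    have hstep : ∀ t, g ((τ ^ t) j₀) = D c (Q t) (Q (t + 1)) := by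
      intro t
      have : (τ ^ (t + 1)) j₀ = τ ((τ ^ t) j₀) := by
        rw [pow_succ', Equiv.Perm.mul_apply]
      simp [hg, hQ, this]
    set δ : ℝ := ∑ t ∈ Finset.range n, D c (Q t) (Q (t + 1)) with hδdef
    have hδ : 0 < δ := by
      rw [hδdef, ← Finset.sum_congr rfl fun t _ => hstep t]
      exact hj₀
    have hpermul : ∀ (K t : ℕ), Q (t + K * n) = Q t := by
      intro K
      induction K with
      | zero => simp
      | succ K ih =>
        intro t
        have : t + (K + 1) * n = (t + K * n) + n := by ring
        rw [this, hper, ih]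
    have hblock : ∀ K : ℕ, ∑ t ∈ Finset.range (K * n), D c (Q t) (Q (t + 1)) = K * δ := by
      intro K
      induction K with
      | zero => simp
      | succ K ih =>
        have hle : K * n ≤ (K + 1) * n := by nlinarith
        rw [← Finset.sum_range_add_sum_Ico (fun t => D c (Q t) (Q (t + 1))) hle, ih]
        have hico : ∑ t ∈ Finset.Ico (K * n) ((K + 1) * n), D c (Q t) (Q (t + 1))
            = ∑ t ∈ Finset.range n, D c (Q (K * n + t)) (Q (K * n + t + 1)) := by
          rw [Finset.sum_Ico_eq_sum_range]
          have : (K + 1) * n - K * n = n := by rw [Nat.succ_mul]; omega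
          rw [this]
        rw [hico]
        have : ∑ t ∈ Finset.range n, D c (Q (K * n + t)) (Q (K * n + t + 1))
            = ∑ t ∈ Finset.range n, D c (Q t) (Q (t + 1)) := by
          refine Finset.sum_congr rfl fun t _ => ?_
          have e1 : Q (K * n + t) = Q t := by
            rw [show K * n + t = t + K * n by ring, hpermul]
          have e2 : Q (K * n + t + 1) = Q (t + 1) := by
            rw [show K * n + t + 1 = (t + 1) + K * n by ring, hpermul]
          rw [e1, e2]
        rw [this, ← hδdef]
        push_cast
        ring
    obtain ⟨M, hM⟩ := hpb (Q 0) (hp _) (Q 0) (hp _)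
    have hKδ : ∀ N : ℕ, ((N + 2 : ℕ) : ℝ) * δ ≤ M := by
      intro N
      set K : ℕ := N + 2 with hK
      set m : ℕ := K * n - 2 with hm
      have hm2 : m + 2 = K * n := by
        have : 2 ≤ K * n := by nlinarith
        omega
      set f : Fin (m + 1) → X × Y := fun s => Q (↑s + 1) with hf
      have hfΓ : ∀ i, f i ∈ Γ := fun i => hp _
      have hps := hM m f hfΓ
      rw [pathSum_eq] at hps
      have hGQ : ∀ s ≤ m + 2, G (Q 0) (Q 0) f s = Q s := by
        intro s hs
        unfold G
        split_ifs with h1 h2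
        · show f ⟨s - 1, _⟩ = Q s
          show Q ((s - 1 : ℕ) + 1) = Q s
          congr 1
          omega
        · rw [h2]
        · have hs2 : s = m + 2 := by omega
          rw [hs2, hm2, show K * n = 0 + K * n by omega, hpermul]
      have : ∑ s ∈ Finset.range (m + 2), D c (G (Q 0) (Q 0) f s) (G (Q 0) (Q 0) f (s + 1))
          = ∑ s ∈ Finset.range (m + 2), D c (Q s) (Q (s + 1)) := by
        refine Finset.sum_congr rfl fun s hs => ?_
        rw [Finset.mem_range] at hs
        rw [hGQ s (by omega), hGQ (s + 1) (by omega)]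
      rw [this, hm2, hblock K] at hps
      exact_mod_cast hps
    obtain ⟨N, hN⟩ := exists_nat_gt (M / δ)
    have h1 : M < N * δ := by
      rw [div_lt_iff₀ hδ] at hN
      exact hN
    have h2 := hKδ N
    push_cast at h2
    nlinarith
  · -- cyclically monotone → path-bounded
    intro hcm p hpΓ q hqΓ
    refine ⟨c p.1 q.2 - c q.1 q.2, ?_⟩
    intro m f hf
    rw [pathSum_eq]
    have hΓG : ∀ s, G p q f s ∈ Γ := G_mem hpΓ hqΓ hf
    set r : Fin (m + 3) → X × Y := fun i => G p q f (m + 2 - ↑i) with hr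
    have hrΓ : ∀ i, r i ∈ Γ := fun i => hΓG _
    have key := hcm (m + 3) r hrΓ (finRotate (m + 3))
    have hLHS : ∑ i, c (r i).1 (r i).2 = ∑ s ∈ Finset.range (m + 3), c (G p q f s).1 (G p q f s).2 := by
      rw [← Finset.sum_range_reflect (fun s => c (G p q f s).1 (G p q f s).2) (m + 3)]
      refine (Fin.sum_univ_eq_sum_range
        (fun s => c (G p q f (m + 2 - s)).1 (G p q f (m + 2 - s)).2) (m + 3)).trans ?_
      refine Finset.sum_congr rfl fun s hs => ?_
      rw [show m + 3 - 1 - s = m + 2 - s by omega]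
    have hRHS : ∑ i, c (r i).1 (r (finRotate (m + 3) i)).2
        = ∑ s ∈ Finset.range (m + 2), c (G p q f (s + 1)).1 (G p q f s).2 + c p.1 q.2 := by
      rw [Fin.sum_univ_castSucc]
      have hlast : (finRotate (m + 3)) (Fin.last (m + 2)) = 0 := finRotate_last
      have hlterm : c (r (Fin.last (m + 2))).1 (r ((finRotate (m + 3)) (Fin.last (m + 2)))).2
          = c p.1 q.2 := by
        rw [hlast]
        have e1 : r (Fin.last (m + 2)) = p := by
          simp [hr, G_zero]
        have e2 : r 0 = q := by
          simp only [hr]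
          norm_num
          exact G_last p q f
        rw [e1, e2]
      rw [hlterm]
      congr 1
      have hcs : ∀ j : Fin (m + 2),
          c (r j.castSucc).1 (r ((finRotate (m + 3)) j.castSucc)).2
            = c (G p q f (m + 2 - ↑j)).1 (G p q f (m + 1 - ↑j)).2 := by
        intro j
        have hrot : (finRotate (m + 3)) j.castSucc = j.succ := by
          rw [finRotate_succ_apply, Fin.coeSucc_eq_succ]
        rw [hrot]
        have e1 : r j.castSucc = G p q f (m + 2 - ↑j) := by
          simp [hr]
        have e2 : r j.succ = G p q f (m + 1 - ↑j) := by
          simp only [hr, Fin.val_succ]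
          congr 1
          omega
        rw [e1, e2]
      rw [Finset.sum_congr rfl fun j _ => hcs j]
      refine (Fin.sum_univ_eq_sum_range
        (fun s => c (G p q f (m + 2 - s)).1 (G p q f (m + 1 - s)).2) (m + 2)).trans ?_
      rw [← Finset.sum_range_reflect (fun s => c (G p q f (s + 1)).1 (G p q f s).2) (m + 2)]
      refine Finset.sum_congr rfl fun s hs => ?_
      rw [Finset.mem_range] at hs
      rw [show m + 2 - 1 - s + 1 = m + 2 - s by omega,
        show m + 2 - 1 - s = m + 1 - s by omega]
    rw [hLHS, hRHS] at key
    rw [Finset.sum_range_succ, G_last] at key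
    have hD : ∑ s ∈ Finset.range (m + 2), D c (G p q f s) (G p q f (s + 1))
        = ∑ s ∈ Finset.range (m + 2), c (G p q f s).1 (G p q f s).2
          - ∑ s ∈ Finset.range (m + 2), c (G p q f (s + 1)).1 (G p q f s).2 := by
      rw [← Finset.sum_sub_distrib]
      exact Finset.sum_congr rfl fun s _ => rfl
    rw [hD]
    linarith
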